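/- Let L be a finite distributive lattice and let p, p' ∈ L, S ⊆ N(p), S' ⊆ N(p') with |S| = |S'|. If p ≤ p' and ⋀S' ≤ ⋀S, then p = p', ⋀S = ⋀S', and S = S'. (Here ⋀S denotes the meet of the elements of S, taken as p when S is empty.) -/
import Mathlib


/-- The meet of the elements of `S`, with the convention that the meet over the
empty set is `p`. -/
def meetA {L : Type*} [SemilatticeInf L] [DecidableEq L] (p : L) (S : Finset L) : L :=
  (insert p S).inf' (Finset.insert_nonempty p S) id

section Aux
open Classical in
private def dummyAux : Nat := 0

open scoped Classical


variable {L : Type*} [DistribLattice L] [DecidableEq L] {p : L} {S : Finset L}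

lemma meetA_le_self (p : L) (S : Finset L) : meetA p S ≤ p :=
  Finset.inf'_le _ (Finset.mem_insert_self p S)

lemma meetA_le {q : L} (h : q ∈ S) : meetA p S ≤ q :=
  Finset.inf'_le _ (Finset.mem_insert_of_mem h)

lemma le_meetA {x : L} (hx : x ≤ p) (h : ∀ q ∈ S, x ≤ q) : x ≤ meetA p S :=
  Finset.le_inf' _ _ (by
    rintro b hb
    rcases Finset.mem_insert.1 hb with rfl | hb
    · exact hx
    · exact h b hb)

lemma cov_sup_eq {q r : L} (hq : q ⋖ p) (hr : r ⋖ p) (hne : q ≠ r) : q ⊔ r = p := by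
  rcases lt_or_eq_of_le (sup_le hq.le hr.le) with h | h
  · rcases lt_or_eq_of_le (le_sup_left : q ≤ q ⊔ r) with h' | h'
    · exact absurd h (hq.2 h')
    · rcases lt_or_eq_of_le (le_sup_right : r ≤ q ⊔ r) with h'' | h''
      · exact absurd h (hr.2 h'')
      · exact absurd (h'.trans h''.symm) hne
  · exact h

/-- If `q ⋖ p`, `q ∉ T`, all elements of `T` are covered by `p`, then joining `q`
with `meetA p T` gives `p`. -/
lemma sup_meetA_of_notMem {q : L} {T : Finset L} (hT : ∀ r ∈ T, r ⋖ p)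
    (hq : q ⋖ p) (hqT : q ∉ T) : q ⊔ meetA p T = p := by
  unfold meetA
  rw [Finset.inf'_sup_distrib_left]
  apply le_antisymm
  · exact Finset.inf'_le_of_le _ (Finset.mem_insert_self p T) (by simpa using hq.le)
  · apply Finset.le_inf'
    rintro b hb
    rcases Finset.mem_insert.1 hb with rfl | hb
    · simpa using hq.le
    · simp only [id]
      rw [cov_sup_eq hq (hT b hb) (fun h => hqT (h ▸ hb))]

/-- membership criterion: for `T ⊆ S` of covers, `meetA p T ≤ q` iff `q ∈ T`. -/
lemma mem_of_meetA_le {q : L} {T : Finset L} (hT : ∀ r ∈ T, r ⋖ p)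
    (hq : q ⋖ p) (hle : meetA p T ≤ q) : q ∈ T := by
  by_contra hqT
  have h1 : q ⊔ meetA p T = p := sup_meetA_of_notMem hT hq hqT
  have h2 : q ⊔ meetA p T = q := sup_eq_left.2 hle
  exact absurd (h2 ▸ h1) hq.lt.ne

/-- Surjectivity: every element of `[⋀S, p]` equals `meetA p T` with
`T = {q ∈ S | x ≤ q}`. -/
lemma eq_meetA_filter (hS : ∀ q ∈ S, q ⋖ p) {x : L}
    (h1 : meetA p S ≤ x) (h2 : x ≤ p) :
    x = meetA p (S.filter (x ≤ ·)) := by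
  apply le_antisymm
  · exact le_meetA h2 (fun q hq => (Finset.mem_filter.1 hq).2)
  · have hkey : meetA p (S.filter (x ≤ ·)) ≤ x ⊔ meetA p S := by
      unfold meetA
      rw [Finset.inf'_sup_distrib_left]
      apply Finset.le_inf'
      rintro b hb
      rcases Finset.mem_insert.1 hb with rfl | hb
      · simp only [id]
        rw [sup_eq_right.2 h2]
        exact Finset.inf'_le _ (Finset.mem_insert_self _ _)
      · simp only [id]
        by_cases hxb : x ≤ b
        · exact le_trans (Finset.inf'_le _ (Finset.mem_insert_of_mem
            (Finset.mem_filter.2 ⟨hb, hxb⟩))) le_sup_right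
        · have hbp : x ⊔ b = p := by
            rcases lt_or_eq_of_le (sup_le h2 (hS b hb).le) with h | h
            · rcases lt_or_eq_of_le (le_sup_right : b ≤ x ⊔ b) with h' | h'
              · exact absurd h ((hS b hb).2 h')
              · exact absurd (le_sup_left.trans h'.symm.le) hxb
            · exact h
          rw [hbp]
          exact Finset.inf'_le _ (Finset.mem_insert_self _ _)
    calc meetA p (S.filter (x ≤ ·)) ≤ x ⊔ meetA p S := hkey
      _ = x := sup_eq_left.2 h1

lemma meetA_mono {T : Finset L} (hTS : T ⊆ S) : meetA p S ≤ meetA p T :=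
  le_meetA (meetA_le_self p S) (fun q hq => meetA_le (hTS hq))

/-- The interval `[⋀S, p]` is in bijection with the powerset of `S`. -/
lemma ncard_Icc (hS : ∀ q ∈ S, q ⋖ p) :
    Set.ncard (Set.Icc (meetA p S) p) = 2 ^ S.card := by
  have key : Set.BijOn (fun T : Finset L => meetA p T) (S.powerset : Finset (Finset L))
      (Set.Icc (meetA p S) p) := by
    refine ⟨?_, ?_, ?_⟩
    · intro T hT
      simp only [Finset.coe_powerset, Set.mem_preimage, Set.mem_powerset_iff,
        Finset.coe_subset] at hT
      have hT' : T ⊆ S := by simpa using hT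
      exact ⟨meetA_mono hT', meetA_le_self p T⟩
    · intro T1 h1 T2 h2 heq
      simp only [Finset.coe_powerset, Set.mem_preimage, Set.mem_powerset_iff,
        Finset.coe_subset] at h1 h2
      have h1' : T1 ⊆ S := by simpa using h1
      have h2' : T2 ⊆ S := by simpa using h2
      have heq' : meetA p T1 = meetA p T2 := heq
      ext q
      constructor
      · intro hq
        exact mem_of_meetA_le (fun r hr => hS r (h2' hr)) (hS q (h1' hq))
          (heq' ▸ meetA_le hq)
      · intro hq
        exact mem_of_meetA_le (fun r hr => hS r (h1' hr)) (hS q (h2' hq))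
          (heq' ▸ meetA_le hq)
    · rintro x ⟨hx1, hx2⟩
      refine ⟨S.filter (x ≤ ·), ?_, (eq_meetA_filter hS hx1 hx2).symm⟩
      exact Finset.mem_coe.2 (Finset.mem_powerset.2 (Finset.filter_subset _ _))
  rw [← key.image_eq, Set.ncard_image_of_injOn key.injOn, Set.ncard_coe_finset,
    Finset.card_powerset]

end Aux

/-- In a finite distributive lattice, let `S ⊆ N(p)`, `S' ⊆ N(p')`
with `|S| = |S'|`. If `p ≤ p'` and `⋀S' ≤ ⋀S` (i.e. `[⋀S, p] ⊆ [⋀S', p']`), then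
`p = p'`, `⋀S = ⋀S'` and `S = S'`. -/
theorem stmt12 {L : Type*} [DistribLattice L] [Fintype L] [DecidableEq L]
    (p p' : L) (S S' : Finset L)
    (hS : ∀ q ∈ S, q ⋖ p) (hS' : ∀ q ∈ S', q ⋖ p')
    (hcard : S.card = S'.card) (hpp' : p ≤ p') (hmeets : meetA p' S' ≤ meetA p S) :
    p = p' ∧ meetA p S = meetA p' S' ∧ S = S' := by
  classical
  have hsub : Set.Icc (meetA p S) p ⊆ Set.Icc (meetA p' S') p' :=
    Set.Icc_subset_Icc hmeets hpp'
  have hcard1 := ncard_Icc hS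
  have hcard2 := ncard_Icc hS'
  have hEq : Set.Icc (meetA p S) p = Set.Icc (meetA p' S') p' := by
    exact Set.eq_of_subset_of_ncard_le hsub (by rw [hcard1, hcard2, hcard])
      (Set.toFinite _)
  have hp : p = p' := by
    have h1 : p' ∈ Set.Icc (meetA p S) p := by
      rw [hEq]; exact ⟨meetA_le_self p' S', le_refl p'⟩
    exact le_antisymm hpp' h1.2
  have hm : meetA p S = meetA p' S' := by
    have h1 : meetA p' S' ∈ Set.Icc (meetA p S) p := by
      rw [hEq]; exact ⟨le_refl _, meetA_le_self p' S'⟩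
    exact le_antisymm h1.1 hmeets
  refine ⟨hp, hm, ?_⟩
  have hSsub : S ⊆ S' := by
    intro q hq
    have hq1 : q ∈ Set.Icc (meetA p' S') p' := by
      rw [← hEq]; exact ⟨meetA_le hq, (hS q hq).le⟩
    have hq2 := eq_meetA_filter hS' hq1.1 hq1.2
    set T := S'.filter (q ≤ ·) with hT
    have hTS' : T ⊆ S' := Finset.filter_subset _ _
    have hTne : T.Nonempty := by
      by_contra hTne
      rw [Finset.not_nonempty_iff_eq_empty] at hTne
      have hq3 : q = p' := by rw [hq2, hTne]; simp [meetA]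
      exact (hp ▸ hS q hq).lt.ne hq3
    obtain ⟨r, hr⟩ := hTne
    have hqr : q ≤ r := (Finset.mem_filter.1 hr).2
    have hrS' : r ∈ S' := hTS' hr
    have : q = r := by
      rcases lt_or_eq_of_le hqr with h | h
      · exact absurd (hS' r hrS').lt ((hp ▸ hS q hq).2 h)
      · exact h
    exact this ▸ hrS'
  exact Finset.eq_of_subset_of_card_le hSsub (hcard ▸ le_refl _)
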